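/- If Y = F(X, U) where U is a uniform random variable independent of (X, Z), and Y = E[φ(Z) | X, Y] almost surely for a bounded measurable φ, then Y is measurable with respect to σ(X) up to null sets, i.e., Y = G(X) a.s. for some measurable G. -/

import Mathlib

open MeasureTheory ProbabilityTheory

/-!
Since `U` is independent of `(X, Z)`, adjoining `σ(U)` to `σ(X)` does not change the conditional
expectation of `φ(Z)`: `E[φ(Z) | X, U] = E[φ(Z) | X]`, as one checks on the π-system of events
`{X ∈ A} ∩ {U ∈ B}`. Since `Y = F(X, U)`, the σ-algebra `σ(X, Y)` lies between `σ(X)` and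
`σ(X, U)`, so the tower property squeezes `Y = E[φ(Z) | X, Y]` down to `E[φ(Z) | X]`, which is a
measurable function of `X`.
-/

open MeasurableSpace Set

lemma IsPiSystem.image2_inter {α : Type*} {C D : Set (Set α)} (hC : IsPiSystem C)
    (hD : IsPiSystem D) : IsPiSystem (image2 (· ∩ ·) C D) := by
  rintro _ ⟨s₁, hs₁, t₁, ht₁, rfl⟩ _ ⟨s₂, hs₂, t₂, ht₂, rfl⟩ hst
  rw [inter_inter_inter_comm] at hst ⊢
  exact mem_image2_of_mem (hC _ hs₁ _ hs₂ hst.left) (hD _ ht₁ _ ht₂ hst.right)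

lemma MeasurableSpace.generateFrom_image2_inter_measurableSet {Ω : Type*}
    (m₁ m₂ : MeasurableSpace Ω) :
    generateFrom (image2 (· ∩ ·) {s | MeasurableSet[m₁] s} {t | MeasurableSet[m₂] t}) =
      m₁ ⊔ m₂ := by
  refine le_antisymm (generateFrom_le ?_) (sup_le (fun s hs => ?_) fun t ht => ?_)
  · rintro _ ⟨s, hs, t, ht, rfl⟩
    exact (le_sup_left (b := m₂) s hs).inter (le_sup_right (a := m₁) t ht)
  · exact measurableSet_generateFrom ⟨s, hs, univ, .univ, inter_univ s⟩
  · exact measurableSet_generateFrom ⟨univ, .univ, t, ht, univ_inter t⟩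

namespace MeasureTheory

variable {Ω E : Type*} [NormedAddCommGroup E] [NormedSpace ℝ E]
  {m₁ m₂ m₃ : MeasurableSpace Ω} [mΩ : MeasurableSpace Ω] {μ : Measure Ω}
  {f g : Ω → E}

lemma setIntegral_eq_of_isPiSystem {C : Set (Set Ω)} (hle : m₁ ≤ mΩ)
    (h_gen : m₁ = generateFrom C) (h_pi : IsPiSystem C)
    (hf : Integrable f μ) (hg : Integrable g μ) (h_univ : ∫ x, f x ∂μ = ∫ x, g x ∂μ)
    (h_basic : ∀ t ∈ C, ∫ x in t, f x ∂μ = ∫ x in t, g x ∂μ) :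
    ∀ t, MeasurableSet[m₁] t → ∫ x in t, f x ∂μ = ∫ x in t, g x ∂μ := by
  refine induction_on_inter h_gen h_pi (by simp) h_basic (fun t ht h_eq => ?_) ?_
  · rw [← sub_eq_iff_eq_add'.2 (integral_add_compl (hle t ht) hf).symm,
      ← sub_eq_iff_eq_add'.2 (integral_add_compl (hle t ht) hg).symm, h_univ, h_eq]
  · intro t h_disj ht h_eq
    rw [integral_iUnion (fun i => hle _ (ht i)) h_disj hf.integrableOn,
      integral_iUnion (fun i => hle _ (ht i)) h_disj hg.integrableOn]
    exact tsum_congr h_eq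

variable [CompleteSpace E] [IsFiniteMeasure μ]

lemma setIntegral_inter_eq_measureReal_smul_of_indep (hle₃ : m₃ ≤ mΩ) (hle₂ : m₂ ≤ mΩ)
    (hindep : Indep m₃ m₂ μ) (hf : StronglyMeasurable[m₃] f) (hfi : Integrable f μ)
    {A B : Set Ω} (hA : MeasurableSet[m₃] A) (hB : MeasurableSet[m₂] B) :
    ∫ x in A ∩ B, f x ∂μ = μ.real B • ∫ x in A, f x ∂μ := by
  calc ∫ x in A ∩ B, f x ∂μ
      = ∫ x in B, A.indicator f x ∂μ := by
        rw [setIntegral_indicator (hle₃ A hA), inter_comm]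
    _ = ∫ x in B, μ[A.indicator f | m₂] x ∂μ :=
        (setIntegral_condExp hle₂ (hfi.indicator (hle₃ A hA)) hB).symm
    _ = ∫ x in B, μ[A.indicator f] ∂μ :=
        setIntegral_congr_ae (hle₂ B hB) <| (condExp_indep_eq hle₃ hle₂
          (hf.indicator hA) hindep).mono fun _ hx _ => hx
    _ = μ.real B • ∫ x in A, f x ∂μ := by
        rw [setIntegral_const, integral_indicator (hle₃ A hA)]

lemma condExp_sup_ae_eq_condExp_of_indep (h₁₃ : m₁ ≤ m₃) (hle₃ : m₃ ≤ mΩ)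
    (hle₂ : m₂ ≤ mΩ) (hindep : Indep m₃ m₂ μ) (hf : StronglyMeasurable[m₃] f)
    (hfi : Integrable f μ) :
    μ[f | m₁ ⊔ m₂] =ᵐ[μ] μ[f | m₁] := by
  have hle₁ : m₁ ≤ mΩ := h₁₃.trans hle₃
  symm
  refine ae_eq_condExp_of_forall_setIntegral_eq (sup_le hle₁ hle₂) hfi
    (fun _ _ _ => integrable_condExp.integrableOn) (fun s hs _ => ?_)
    (stronglyMeasurable_condExp.mono (le_sup_left : m₁ ≤ m₁ ⊔ m₂)).aestronglyMeasurable
  refine setIntegral_eq_of_isPiSystem (sup_le hle₁ hle₂)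
    (generateFrom_image2_inter_measurableSet m₁ m₂).symm
    ((@isPiSystem_measurableSet _ m₁).image2_inter (@isPiSystem_measurableSet _ m₂))
    integrable_condExp hfi (integral_condExp hle₁) ?_ s hs
  rintro _ ⟨A, hA, B, hB, rfl⟩
  rw [setIntegral_inter_eq_measureReal_smul_of_indep hle₃ hle₂ hindep
      (stronglyMeasurable_condExp.mono h₁₃) integrable_condExp (h₁₃ A hA) hB,
    setIntegral_inter_eq_measureReal_smul_of_indep hle₃ hle₂ hindep hf hfi (h₁₃ A hA) hB,
    setIntegral_condExp hle₁ hfi hA]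

lemma condExp_ae_eq_condExp_of_le_of_le (h₁₂ : m₁ ≤ m₂) (h₂₃ : m₂ ≤ m₃)
    (hle₃ : m₃ ≤ mΩ) (h : μ[f | m₃] =ᵐ[μ] μ[f | m₁]) :
    μ[f | m₂] =ᵐ[μ] μ[f | m₁] :=
  calc μ[f | m₂]
      =ᵐ[μ] μ[μ[f | m₃] | m₂] := (condExp_condExp_of_le h₂₃ hle₃).symm
    _ =ᵐ[μ] μ[μ[f | m₁] | m₂] := condExp_congr_ae h
    _ = μ[f | m₁] := condExp_of_stronglyMeasurable (h₂₃.trans hle₃)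
        (stronglyMeasurable_condExp.mono h₁₂) integrable_condExp

end MeasureTheory

theorem fixed_point_condexp_measurable_of_noise_general
    {Ω : Type*} {mΩ : MeasurableSpace Ω}
    (μ : Measure Ω) [IsProbabilityMeasure μ]
    (X Z Y U : Ω → ℝ)
    (hX : Measurable X) (hZ : Measurable Z) (hU : Measurable U)
    (hindep : IndepFun U (fun ω => (X ω, Z ω)) μ)
    (F : ℝ × ℝ → ℝ) (hF : Measurable F)
    (hYF : ∀ ω, Y ω = F (X ω, U ω))
    (φ : ℝ → ℝ) (hφ : Measurable φ) (hφb : ∃ C, ∀ z, |φ z| ≤ C)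
    (hfix : Y =ᵐ[μ] condExp
      (MeasurableSpace.comap X inferInstance ⊔ MeasurableSpace.comap Y inferInstance) μ
      (fun ω => φ (Z ω))) :
    ∃ G : ℝ → ℝ, Measurable G ∧ Y =ᵐ[μ] fun ω => G (X ω) := by
  obtain ⟨C, hC⟩ := hφb
  have hfi : Integrable (fun ω => φ (Z ω)) μ :=
    (integrable_const C).mono' (hφ.comp hZ).aestronglyMeasurable
      (.of_forall fun ω => (Real.norm_eq_abs _).trans_le (hC (Z ω)))
  obtain ⟨G, hG, hGX⟩ := (stronglyMeasurable_condExp (μ := μ) (f := fun ω => φ (Z ω))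
    (m := MeasurableSpace.comap X inferInstance)).exists_eq_measurable_comp
  have hY_XU : Measurable[MeasurableSpace.comap X inferInstance ⊔
      MeasurableSpace.comap U inferInstance] Y := by
    rw [funext hYF]
    exact hF.comp (((comap_measurable X).mono le_sup_left le_rfl).prodMk
      ((comap_measurable U).mono le_sup_right le_rfl))
  have hXZ : Measurable fun ω => (X ω, Z ω) := hX.prodMk hZ
  have hnoise :=
    condExp_sup_ae_eq_condExp_of_indep
      (measurable_fst.comp (comap_measurable _)).comap_le hXZ.comap_le hU.comap_le
      hindep.symm ((hφ.comp measurable_snd).comp (comap_measurable _)).stronglyMeasurable hfi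
  refine ⟨G, hG.measurable, hfix.trans ?_⟩
  rw [← Function.comp_def G X, ← hGX]
  exact condExp_ae_eq_condExp_of_le_of_le le_sup_left (sup_le le_sup_left hY_XU.comap_le)
    (sup_le hX.comap_le hU.comap_le) hnoise

/-- If `Y = F(X, U)` with `U` uniform on `[0,1]` independent of `(X, Z)`, and `Y`
satisfies the fixed-point relation `Y = E[φ(Z) | X, Y]` a.s. for a bounded measurable
`φ`, then `Y` is σ(X)-measurable up to null sets: `Y = G(X)` a.s. for some measurable `G`. -/
theorem fixed_point_condexp_measurable_of_noise
    {Ω : Type*} {mΩ : MeasurableSpace Ω} [StandardBorelSpace Ω]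
    (μ : Measure Ω) [IsProbabilityMeasure μ]
    (X Z Y U : Ω → ℝ)
    (hX : Measurable X) (hZ : Measurable Z) (hY : Measurable Y) (hU : Measurable U)
    (hunif : μ.map U = volume.restrict (Set.Icc (0 : ℝ) 1))
    (hindep : IndepFun U (fun ω => (X ω, Z ω)) μ)
    (F : ℝ × ℝ → ℝ) (hF : Measurable F)
    (hYF : ∀ ω, Y ω = F (X ω, U ω))
    (φ : ℝ → ℝ) (hφ : Measurable φ) (hφb : ∃ C, ∀ z, |φ z| ≤ C)
    (hfix : Y =ᵐ[μ] condExp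
      (MeasurableSpace.comap X inferInstance ⊔ MeasurableSpace.comap Y inferInstance) μ
      (fun ω => φ (Z ω))) :
    ∃ G : ℝ → ℝ, Measurable G ∧ Y =ᵐ[μ] fun ω => G (X ω) :=
  fixed_point_condexp_measurable_of_noise_general (mΩ := mΩ) μ X Z Y U hX hZ hU hindep F hF hYF φ hφ
    hφb hfix
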